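/- Let $R$ be a Noetherian local domain dominated by a rank 1 valuation ring $V$ of its quotient field $K$, with valuation $\nu$ and value group $\Gamma$. Let $p = p(\hat R)_\infty$ be the prime ideal of elements of infinite value in $\hat R$, and let $\overline K$ be the quotient field of $\hat R / p$. Then the function $\overline\nu$ on $\hat R/p \setminus \{0\}$ defined by $\overline\nu(f + p) = \lim_n \nu(f_n)$ (the eventually constant value of $\nu$ on a Cauchy sequence $\{f_n\} \subset R$ converging to $f$) is a well-defined valuation on $\overline K$ extending $\nu$, which dominates $\hat R/p$, and its value group equals $\Gamma$ and its residue field equals $V/m_V$; i.e., $(\overline V, \overline K)$ is an immediate extension of $(V, K)$. -/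

import Mathlib

set_option synthInstance.maxHeartbeats 1000000
set_option maxHeartbeats 1000000

section

variable {R : Type*} [CommRing R] [IsDomain R] [IsNoetherianRing R] [IsLocalRing R]

/-- `c` is a Cauchy sequence in `R` for the `m_R`-adic topology. -/
def IsAdicCauchy (c : ℕ → R) : Prop :=
  ∀ i : ℕ, ∃ N, ∀ m n, N ≤ m → N ≤ n → c m - c n ∈ (IsLocalRing.maximalIdeal R) ^ i

/-- The Cauchy sequence `c` in `R` converges to `f` in the `m_R`-adic completion `R̂`. -/
def ConvergesTo (c : ℕ → R)
    (f : AdicCompletion (IsLocalRing.maximalIdeal R) R) : Prop :=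
  ∀ i : ℕ, ∃ N, ∀ n, N ≤ n →
    AdicCompletion.eval (IsLocalRing.maximalIdeal R) R i f = Submodule.Quotient.mk (c n)

/-- The sequence `c` has values increasing beyond every element of the value group. -/
def HasInfiniteValue (ν : FractionRing R → ℝ) (c : ℕ → R) : Prop :=
  ∀ ρ : ℝ, ∃ N, ∀ n, N ≤ n → c n = 0 ∨ ρ < ν (algebraMap R (FractionRing R) (c n))

/-!
Since `𝔪 = maximalIdeal R` is finitely generated and `ν > 0` on `𝔪`, there is `δ > 0` with
`ν ≥ i δ` on `𝔪 ^ i`. Hence along an `𝔪`-adic Cauchy sequence the values either tend to `∞`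
or are eventually constant, and two sequences with the same limit in `R̂` differ by a sequence of
values tending to `∞`, so they have the same limiting value. This limit is a valuation on `R̂`
with values in `ℝ ∪ {∞}` whose support is `p(R̂)_∞`; it descends to `R̂ / p` and extends to the
fraction field `K̄`. Since `R` is dense in `R̂`, every `g ∈ R̂ \ p` is approximated by some
`a ∈ R` with `ν̄ (g - a) > ν̄ g`; writing `ξ ∈ K̄` as `g / s` and approximating `g` and `s`
gives the value group and the residue field.
-/

open Filter Topology IsLocalRing

namespace AddValuation

section OfReal

variable {K : Type*} [Field K]

open Classical in
/-- The junk value `ν 0` is replaced by `⊤`. -/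
noncomputable def ofReal (ν : K → ℝ) (hmul : ∀ x y : K, x ≠ 0 → y ≠ 0 → ν (x * y) = ν x + ν y)
    (hadd : ∀ x y : K, x ≠ 0 → y ≠ 0 → x + y ≠ 0 → min (ν x) (ν y) ≤ ν (x + y)) :
    AddValuation K (WithTop ℝ) :=
  AddValuation.of (fun x => if x = 0 then ⊤ else (ν x : WithTop ℝ)) (if_pos rfl)
    (by
      have h := hmul 1 1 one_ne_zero one_ne_zero
      rw [mul_one] at h
      simp only [one_ne_zero, if_false]
      exact_mod_cast (by linarith : ν 1 = 0))
    (fun x y => by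
      by_cases hx : x = 0
      · simp [hx]
      by_cases hy : y = 0
      · simp [hy]
      by_cases hxy : x + y = 0
      · simp [hxy]
      simp only [hx, hy, hxy, if_false]
      exact_mod_cast hadd x y hx hy hxy)
    (fun x y => by
      by_cases hx : x = 0
      · simp [hx]
      by_cases hy : y = 0
      · simp [hy]
      simp only [hx, hy, mul_ne_zero hx hy, if_false, hmul x y hx hy, WithTop.coe_add])

variable (ν : K → ℝ) (hmul : ∀ x y : K, x ≠ 0 → y ≠ 0 → ν (x * y) = ν x + ν y)
  (hadd : ∀ x y : K, x ≠ 0 → y ≠ 0 → x + y ≠ 0 → min (ν x) (ν y) ≤ ν (x + y))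

theorem ofReal_apply {x : K} (hx : x ≠ 0) : ofReal ν hmul hadd x = ν x := if_neg hx

theorem coe_lt_ofReal_iff {x : K} {r : ℝ} :
    (r : WithTop ℝ) < ofReal ν hmul hadd x ↔ x = 0 ∨ r < ν x := by
  by_cases hx : x = 0
  · simp [hx, ofReal]
  · simp [ofReal_apply ν hmul hadd hx, hx]

end OfReal

section ValueIdeal

variable {A : Type*} [CommRing A] (v : AddValuation A (WithTop ℝ))

def geIdeal (hv : ∀ x, 0 ≤ v x) (γ : WithTop ℝ) : Ideal A where
  carrier := {x | γ ≤ v x}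
  add_mem' := v.map_le_add
  zero_mem' := by simp
  smul_mem' r x hx := by
    change γ ≤ v (r * x)
    rw [v.map_mul]
    exact le_add_of_nonneg_of_le (hv r) hx

@[simp]
theorem mem_geIdeal {hv : ∀ x, 0 ≤ v x} {γ : WithTop ℝ} {x : A} :
    x ∈ geIdeal v hv γ ↔ γ ≤ v x := Iff.rfl

theorem geIdeal_mul_le (hv : ∀ x, 0 ≤ v x) (γ γ' : WithTop ℝ) :
    geIdeal v hv γ * geIdeal v hv γ' ≤ geIdeal v hv (γ + γ') :=
  Ideal.mul_le.2 fun x hx y hy => by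
    change _ ≤ v (x * y)
    rw [v.map_mul]
    exact add_le_add hx hy

theorem exists_pos_mul_le_of_mem_pow (hv : ∀ x, 0 ≤ v x) {I : Ideal A} (hI : I.FG)
    (hvI : ∀ x ∈ I, 0 < v x) :
    ∃ δ : ℝ, 0 < δ ∧ ∀ (i : ℕ), ∀ x ∈ I ^ i, ((i * δ : ℝ) : WithTop ℝ) ≤ v x := by
  obtain ⟨s, rfl⟩ := hI
  obtain ⟨δ, hδ, hδs⟩ := exists_between ((Finset.lt_inf_iff (WithTop.coe_lt_top 0)).2
    fun x hx => hvI x (Ideal.subset_span hx))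
  lift δ to ℝ using hδs.ne_top
  have hspan : Ideal.span ↑s ≤ geIdeal v hv δ :=
    Ideal.span_le.2 fun x hx => hδs.le.trans (Finset.inf_le hx)
  refine ⟨δ, by exact_mod_cast hδ, fun i => ?_⟩
  suffices Ideal.span ↑s ^ i ≤ geIdeal v hv ((i * δ : ℝ)) from fun x hx => this hx
  induction i with
  | zero => exact fun x _ => by simpa using hv x
  | succ i ih =>
    rw [pow_succ]
    refine (Ideal.mul_mono ih hspan).trans ((geIdeal_mul_le ..).trans_eq ?_)
    rw [Nat.cast_succ, add_one_mul, WithTop.coe_add]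

end ValueIdeal

theorem tendsto_of_tendsto_sub {A : Type*} [CommRing A] (v : AddValuation A (WithTop ℝ))
    {c c' : ℕ → A} {γ : WithTop ℝ} (hcc' : Tendsto (fun n => v (c n - c' n)) atTop (𝓝 ⊤))
    (hc : Tendsto (fun n => v (c n)) atTop (𝓝 γ)) :
    Tendsto (fun n => v (c' n)) atTop (𝓝 γ) := by
  induction γ using WithTop.recTopCoe with
  | top =>
    rw [WithTop.tendsto_nhds_top_iff] at hc hcc' ⊢
    intro r
    filter_upwards [hc r, hcc' r] with n h h'
    have h'' : (r : WithTop ℝ) < v (c' n - c n) := v.map_sub_swap (c n) (c' n) ▸ h'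
    simpa only [add_sub_cancel] using v.map_lt_add h h''
  | coe ρ =>
    have hlt : (ρ : WithTop ℝ) < (ρ + 1 : ℝ) := by exact_mod_cast lt_add_one ρ
    refine hc.congr' ?_
    filter_upwards [hc.eventually_lt_const hlt,
      (WithTop.tendsto_nhds_top_iff _).1 hcc' (ρ + 1)] with n h h'
    exact (v.map_eq_of_lt_sub (h.trans (v.map_sub_swap _ _ ▸ h'))).symm

structure Dominates {A : Type*} [CommRing A] [IsLocalRing A] (v : AddValuation A (WithTop ℝ)) :
    Prop where
  nonneg : ∀ x, 0 ≤ v x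
  pos : ∀ x ∈ maximalIdeal A, 0 < v x

section FractionRing

variable {B : Type*} [CommRing B] [IsDomain B] (ν : FractionRing B → ℝ)
  (hmul : ∀ x y : FractionRing B, x ≠ 0 → y ≠ 0 → ν (x * y) = ν x + ν y)
  (hadd : ∀ x y : FractionRing B, x ≠ 0 → y ≠ 0 → x + y ≠ 0 → min (ν x) (ν y) ≤ ν (x + y))

theorem comap_ofReal_apply {x : B} (hx : x ≠ 0) :
    (ofReal ν hmul hadd).comap (algebraMap B (FractionRing B)) x =
      ν (algebraMap B (FractionRing B) x) :=
  ofReal_apply ν hmul hadd ((map_ne_zero_iff _ (IsFractionRing.injective B _)).2 hx)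

theorem hasInfiniteValue_iff_tendsto (c : ℕ → B) :
    HasInfiniteValue ν c ↔ Tendsto (fun n => (ofReal ν hmul hadd).comap
      (algebraMap B (FractionRing B)) (c n)) atTop (𝓝 ⊤) := by
  rw [WithTop.tendsto_nhds_top_iff]
  change _ ↔ ∀ r : ℝ, ∀ᶠ n in atTop, (r : WithTop ℝ) < ofReal ν hmul hadd (algebraMap B _ (c n))
  simp only [HasInfiniteValue, eventually_atTop, coe_lt_ofReal_iff,
    map_eq_zero_iff _ (IsFractionRing.injective B (FractionRing B))]

theorem dominates_comap_ofReal [IsLocalRing B]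
    (hR : ∀ x : B, x ≠ 0 → 0 ≤ ν (algebraMap B (FractionRing B) x))
    (hm : ∀ x ∈ maximalIdeal B, x ≠ 0 → 0 < ν (algebraMap B (FractionRing B) x)) :
    ((ofReal ν hmul hadd).comap (algebraMap B (FractionRing B))).Dominates := by
  constructor
  · intro x
    rcases eq_or_ne x 0 with rfl | hx
    · simp
    · rw [comap_ofReal_apply ν hmul hadd hx]
      exact_mod_cast hR x hx
  · intro x hxm
    rcases eq_or_ne x 0 with rfl | hx
    · simp
    · rw [comap_ofReal_apply ν hmul hadd hx]
      exact_mod_cast hm x hxm hx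

end FractionRing

section FractionRingQuotSupp

variable {B : Type*} [CommRing B] (W : AddValuation B (WithTop ℝ))

instance isPrime_supp : W.supp.IsPrime :=
  inferInstanceAs (Valuation.supp (AddValuation.toValuation W)).IsPrime

theorem nonZeroDivisors_le_primeCompl_supp_onQuot :
    nonZeroDivisors (B ⧸ W.supp) ≤ (toValuation (W.onQuot le_rfl)).supp.primeCompl :=
  fun s hs hsupp => nonZeroDivisors.ne_zero hs <| by
    obtain ⟨f, rfl⟩ := Ideal.Quotient.mk_surjective s
    exact Ideal.Quotient.eq_zero_iff_mem.2 hsupp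

noncomputable def extendToFractionRingQuotSupp :
    AddValuation (FractionRing (B ⧸ W.supp)) (WithTop ℝ) :=
  ofValuation <| (toValuation (W.onQuot le_rfl)).extendToLocalization
    W.nonZeroDivisors_le_primeCompl_supp_onQuot _

theorem extendToFractionRingQuotSupp_algebraMap_mk (f : B) :
    W.extendToFractionRingQuotSupp (algebraMap _ _ (Ideal.Quotient.mk W.supp f)) = W f :=
  Valuation.extendToLocalization_apply_map_apply _ W.nonZeroDivisors_le_primeCompl_supp_onQuot _ _

end FractionRingQuotSupp

section Untop

variable {L : Type*} [Field L] (V : AddValuation L (WithTop ℝ)) {x y : L}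

theorem coe_untop₀ (hx : x ≠ 0) : ((V x).untop₀ : WithTop ℝ) = V x :=
  WithTop.coe_untop₀_of_ne_top (V.ne_top_iff.2 hx)

theorem untop₀_map_mul (hx : x ≠ 0) (hy : y ≠ 0) :
    (V (x * y)).untop₀ = (V x).untop₀ + (V y).untop₀ := by
  rw [V.map_mul, WithTop.untop₀_add (V.ne_top_iff.2 hx) (V.ne_top_iff.2 hy)]

theorem min_untop₀_le_untop₀_map_add (hx : x ≠ 0) (hy : y ≠ 0) (hxy : x + y ≠ 0) :
    min (V x).untop₀ (V y).untop₀ ≤ (V (x + y)).untop₀ := by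
  rw [← WithTop.untop₀_min (V.ne_top_iff.2 hx) (V.ne_top_iff.2 hy)]
  exact WithTop.untop₀_le_untop₀ (V.ne_top_iff.2 hxy) (V.map_add x y)

end Untop

section ImmediateExtension

variable {B D L : Type*} [CommRing D] [Field L] [Algebra D L] [IsFractionRing D L]
  {V : AddValuation L (WithTop ℝ)} {ι : B → L}

theorem exists_lt_map_sub_of_approx
    (happrox : ∀ (g : D) (r : ℝ), ∃ a, (r : WithTop ℝ) ≤ V (algebraMap D L g - ι a))
    {g : D} (hg : g ≠ 0) :
    ∃ a, V (algebraMap D L g) < V (algebraMap D L g - ι a) ∧ V (ι a) = V (algebraMap D L g) := by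
  obtain ⟨ρ, hρ⟩ := WithTop.ne_top_iff_exists.1
    (V.ne_top_iff.2 ((map_ne_zero_iff _ (IsFractionRing.injective D L)).2 hg))
  obtain ⟨a, ha⟩ := happrox g (ρ + 1)
  have hlt : V (algebraMap D L g) < V (algebraMap D L g - ι a) := by
    rw [← hρ]
    exact (WithTop.coe_lt_coe.2 (lt_add_one ρ)).trans_le ha
  exact ⟨a, hlt, V.map_eq_of_lt_sub (by rwa [V.map_sub_swap])⟩

theorem exists_map_add_eq_of_approx [IsDomain D]
    (happrox : ∀ (g : D) (r : ℝ), ∃ a, (r : WithTop ℝ) ≤ V (algebraMap D L g - ι a))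
    {ξ : L} (hξ : ξ ≠ 0) : ∃ a b, V (ι b) ≠ ⊤ ∧ V ξ + V (ι b) = V (ι a) := by
  obtain ⟨⟨g, s⟩, h⟩ := IsLocalization.surj (nonZeroDivisors D) ξ
  dsimp only at h
  have hs : algebraMap D L s ≠ 0 := IsFractionRing.to_map_ne_zero_of_mem_nonZeroDivisors s.2
  have hg : g ≠ 0 := by
    rintro rfl
    simp [hξ, hs] at h
  obtain ⟨a, -, ha⟩ := exists_lt_map_sub_of_approx happrox hg
  obtain ⟨b, -, hb⟩ := exists_lt_map_sub_of_approx happrox (nonZeroDivisors.ne_zero s.2)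
  exact ⟨a, b, hb ▸ V.ne_top_iff.2 hs, by rw [ha, hb, ← V.map_mul, h]⟩

theorem exists_lt_map_mul_sub_of_approx [IsDomain D]
    (happrox : ∀ (g : D) (r : ℝ), ∃ a, (r : WithTop ℝ) ≤ V (algebraMap D L g - ι a))
    {ξ : L} (hξ : V ξ = 0) :
    ∃ a b, V (ι b) ≠ ⊤ ∧ V (ι b) = V (ι a) ∧ V (ι b) < V (ξ * ι b - ι a) := by
  obtain ⟨⟨g, s⟩, h⟩ := IsLocalization.surj (nonZeroDivisors D) ξ
  dsimp only at h
  have hs : algebraMap D L s ≠ 0 := IsFractionRing.to_map_ne_zero_of_mem_nonZeroDivisors s.2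
  have hgs : V (algebraMap D L g) = V (algebraMap D L s) := by rw [← h, V.map_mul, hξ, zero_add]
  have hg : g ≠ 0 := by
    rintro rfl
    exact V.ne_top_iff.2 hs (by simpa using hgs.symm)
  obtain ⟨a, hga, ha⟩ := exists_lt_map_sub_of_approx happrox hg
  obtain ⟨b, hsb, hb⟩ := exists_lt_map_sub_of_approx happrox (nonZeroDivisors.ne_zero s.2)
  refine ⟨a, b, hb ▸ V.ne_top_iff.2 hs, by rw [ha, hb, hgs], ?_⟩
  -- Both summands have value `> V s = V (ι b)`.
  have hsplit : ξ * ι b - ι a = -(ξ * (algebraMap D L s - ι b)) + (algebraMap D L g - ι a) := by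
    rw [← h]
    ring
  rw [hsplit, hb]
  refine V.map_lt_add ?_ (hgs ▸ hga)
  rwa [V.map_neg, V.map_mul, hξ, zero_add]

variable [IsDomain D] [CommRing B] [IsDomain B] (ν : FractionRing B → ℝ)
  (hmul : ∀ x y : FractionRing B, x ≠ 0 → y ≠ 0 → ν (x * y) = ν x + ν y)
  (hadd : ∀ x y : FractionRing B, x ≠ 0 → y ≠ 0 → x + y ≠ 0 → min (ν x) (ν y) ≤ ν (x + y))

theorem setOf_untop₀_eq_of_approx
    (happrox : ∀ (g : D) (r : ℝ), ∃ a, (r : WithTop ℝ) ≤ V (algebraMap D L g - ι a))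
    (hVι : ∀ x, V (ι x) = ofReal ν hmul hadd (algebraMap B (FractionRing B) x)) :
    {r : ℝ | ∃ ξ : L, ξ ≠ 0 ∧ (V ξ).untop₀ = r} =
      {r : ℝ | ∃ x : FractionRing B, x ≠ 0 ∧ ν x = r} := by
  set φ := algebraMap B (FractionRing B)
  set vK := ofReal ν hmul hadd
  have key : ∀ {ξ : L} {x : FractionRing B} {a b : B}, V (ι b) ≠ ⊤ → V ξ + V (ι b) = V (ι a) →
      x * φ b = φ a → V ξ = vK x := fun hb h h' =>
    WithTop.add_right_cancel hb (h.trans (by rw [hVι, hVι, ← h', vK.map_mul]))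
  ext r
  constructor
  · rintro ⟨ξ, hξ, rfl⟩
    obtain ⟨a, b, hb, hab⟩ := exists_map_add_eq_of_approx happrox hξ
    have hb0 : φ b ≠ 0 := vK.ne_top_iff.1 (hVι b ▸ hb)
    have ha0 : φ a ≠ 0 :=
      vK.ne_top_iff.1 (hVι a ▸ hab ▸ WithTop.add_ne_top.2 ⟨V.ne_top_iff.2 hξ, hb⟩)
    refine ⟨φ a / φ b, div_ne_zero ha0 hb0, WithTop.coe_injective ?_⟩
    rw [← ofReal_apply ν hmul hadd (div_ne_zero ha0 hb0), V.coe_untop₀ hξ]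
    exact (key hb hab (div_mul_cancel₀ _ hb0)).symm
  · rintro ⟨x, hx, rfl⟩
    obtain ⟨a, b, hb, rfl⟩ := IsFractionRing.div_surjective B x
    have hb0 : φ b ≠ 0 := IsFractionRing.to_map_ne_zero_of_mem_nonZeroDivisors hb
    have hιa : ι a ≠ 0 := V.ne_top_iff.1 (hVι a ▸ vK.ne_top_iff.2 (div_ne_zero_iff.1 hx).1)
    have hιb : ι b ≠ 0 := V.ne_top_iff.1 (hVι b ▸ vK.ne_top_iff.2 hb0)
    refine ⟨ι a / ι b, div_ne_zero hιa hιb, WithTop.coe_injective ?_⟩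
    rw [V.coe_untop₀ (div_ne_zero hιa hιb), ← ofReal_apply ν hmul hadd hx]
    exact key (V.ne_top_iff.2 hιb) (by rw [← V.map_mul, div_mul_cancel₀ _ hιb])
      (div_mul_cancel₀ _ hb0)

theorem exists_residue_of_approx
    (happrox : ∀ (g : D) (r : ℝ), ∃ a, (r : WithTop ℝ) ≤ V (algebraMap D L g - ι a))
    (hVι : ∀ x, V (ι x) = ofReal ν hmul hadd (algebraMap B (FractionRing B) x))
    {ξ : L} (hξ : ξ ≠ 0) (hξ0 : (V ξ).untop₀ = 0) :
    ∃ a b : B, b ≠ 0 ∧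
      (a = 0 ∨ ν (algebraMap B (FractionRing B) b) ≤ ν (algebraMap B (FractionRing B) a)) ∧
      (ξ * ι b = ι a ∨ (V (ξ * ι b - ι a)).untop₀ > (V (ι b)).untop₀) := by
  obtain ⟨a, b, hb, hab, hlt⟩ :=
    exists_lt_map_mul_sub_of_approx happrox (by rw [← V.coe_untop₀ hξ, hξ0]; rfl)
  have hb0 : algebraMap B (FractionRing B) b ≠ 0 := (ofReal ν hmul hadd).ne_top_iff.1 (hVι b ▸ hb)
  have ha0 : algebraMap B (FractionRing B) a ≠ 0 :=
    (ofReal ν hmul hadd).ne_top_iff.1 (hVι a ▸ hab ▸ hb)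
  refine ⟨a, b, fun h => hb0 (by simp [h]), Or.inr ?_, ?_⟩
  · rw [hVι, hVι, ofReal_apply ν hmul hadd hb0, ofReal_apply ν hmul hadd ha0] at hab
    exact (WithTop.coe_inj.1 hab).le
  rcases eq_or_ne (ξ * ι b - ι a) 0 with h | h
  · exact Or.inl (sub_eq_zero.1 h)
  · right
    rw [gt_iff_lt, ← WithTop.coe_lt_coe, V.coe_untop₀ h, V.coe_untop₀ (V.ne_top_iff.1 hb)]
    exact hlt

end ImmediateExtension

end AddValuation

section Completion

variable {A : Type*} [CommRing A] [IsLocalRing A]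

variable {c c' : ℕ → A} {f f' : AdicCompletion (maximalIdeal A) A}

theorem ConvergesTo.exists_sub_mem_pow (hc : ConvergesTo c f) (hc' : ConvergesTo c' f) (i : ℕ) :
    ∃ N, ∀ m n, N ≤ m → N ≤ n → c m - c' n ∈ maximalIdeal A ^ i := by
  obtain ⟨N, hN⟩ := hc i
  obtain ⟨N', hN'⟩ := hc' i
  refine ⟨max N N', fun m n hm hn => ?_⟩
  have h := (hN m (le_of_max_le_left hm)).symm.trans (hN' n (le_of_max_le_right hn))
  simpa using (Submodule.Quotient.eq _).1 h

theorem ConvergesTo.isAdicCauchy (hc : ConvergesTo c f) : IsAdicCauchy c :=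
  hc.exists_sub_mem_pow hc

theorem exists_convergesTo (f : AdicCompletion (maximalIdeal A) A) : ∃ c, ConvergesTo c f := by
  obtain ⟨c, rfl⟩ := AdicCompletion.mk_surjective (maximalIdeal A) A f
  exact ⟨c, fun i => ⟨i, fun n hn => (AdicCompletion.AdicCauchySequence.mk_eq_mk hn c).symm⟩⟩

theorem convergesTo_algebraMap (x : A) :
    ConvergesTo (fun _ => x) (algebraMap A (AdicCompletion (maximalIdeal A) A) x) :=
  fun _ => ⟨0, fun _ _ => rfl⟩

theorem ConvergesTo.add (hc : ConvergesTo c f) (hc' : ConvergesTo c' f') :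
    ConvergesTo (c + c') (f + f') := fun i => by
  obtain ⟨N, hN⟩ := hc i
  obtain ⟨N', hN'⟩ := hc' i
  exact ⟨max N N', fun n hn => by
    rw [map_add, hN n (le_of_max_le_left hn), hN' n (le_of_max_le_right hn)]; rfl⟩

theorem ConvergesTo.sub (hc : ConvergesTo c f) (hc' : ConvergesTo c' f') :
    ConvergesTo (c - c') (f - f') := fun i => by
  obtain ⟨N, hN⟩ := hc i
  obtain ⟨N', hN'⟩ := hc' i
  exact ⟨max N N', fun n hn => by
    rw [map_sub, hN n (le_of_max_le_left hn), hN' n (le_of_max_le_right hn)]; rfl⟩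

theorem ConvergesTo.mul (hc : ConvergesTo c f) (hc' : ConvergesTo c' f') :
    ConvergesTo (c * c') (f * f') := fun i => by
  obtain ⟨N, hN⟩ := hc i
  obtain ⟨N', hN'⟩ := hc' i
  refine ⟨max N N', fun n hn => ?_⟩
  change AdicCompletion.eval _ _ i f * AdicCompletion.eval _ _ i f' = _
  rw [hN n (le_of_max_le_left hn), hN' n (le_of_max_le_right hn)]; rfl

noncomputable def completionVal (v : AddValuation A (WithTop ℝ))
    (f : AdicCompletion (maximalIdeal A) A) : WithTop ℝ :=
  limUnder atTop fun n => v ((exists_convergesTo f).choose n)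

namespace AddValuation.Dominates

variable {v : AddValuation A (WithTop ℝ)} [IsNoetherianRing A]

theorem exists_lt_map_sub (hv : v.Dominates) (hc : ConvergesTo c f) (hc' : ConvergesTo c' f)
    (r : ℝ) :
    ∃ N, ∀ m n, N ≤ m → N ≤ n → (r : WithTop ℝ) < v (c m - c' n) := by
  obtain ⟨δ, hδ, hpow⟩ := v.exists_pos_mul_le_of_mem_pow hv.nonneg
    (maximalIdeal A).fg_of_isNoetherianRing hv.pos
  obtain ⟨i, hi⟩ := exists_nat_gt (r / δ)
  have hri : (r : WithTop ℝ) < (i * δ : ℝ) := by exact_mod_cast (div_lt_iff₀ hδ).1 hi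
  obtain ⟨N, hN⟩ := hc.exists_sub_mem_pow hc' i
  exact ⟨N, fun m n hm hn => hri.trans_le (hpow i _ (hN m n hm hn))⟩

theorem tendsto_map_sub (hv : v.Dominates) (hc : ConvergesTo c f) (hc' : ConvergesTo c' f) :
    Tendsto (fun n => v (c n - c' n)) atTop (𝓝 ⊤) :=
  (WithTop.tendsto_nhds_top_iff _).2 fun r => eventually_atTop.2 <|
    (hv.exists_lt_map_sub hc hc' r).imp fun _ hN n hn => hN n n hn hn

theorem tendsto_top_or_eventually_eq (hv : v.Dominates) (hc : ConvergesTo c f) :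
    Tendsto (fun n => v (c n)) atTop (𝓝 ⊤) ∨ ∃ ρ : ℝ, ∀ᶠ n in atTop, v (c n) = ρ := by
  refine or_iff_not_imp_left.2 fun h => ?_
  obtain ⟨r, hr⟩ : ∃ r : ℝ, ∀ N, ∃ n ≥ N, v (c n) ≤ r := by
    simpa [WithTop.tendsto_nhds_top_iff] using h
  obtain ⟨N, hN⟩ := hv.exists_lt_map_sub hc hc r
  obtain ⟨n₀, hn₀, hn₀r⟩ := hr N
  obtain ⟨ρ, hρ⟩ := WithTop.ne_top_iff_exists.1 (ne_top_of_le_ne_top WithTop.coe_ne_top hn₀r)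
  refine ⟨ρ, eventually_atTop.2 ⟨N, fun n hn => ?_⟩⟩
  rw [hρ]
  exact v.map_eq_of_lt_sub (hn₀r.trans_lt (hN n n₀ hn hn₀))

theorem tendsto_completionVal (hv : v.Dominates) (hc : ConvergesTo c f) :
    Tendsto (fun n => v (c n)) atTop (𝓝 (completionVal v f)) := by
  have hc₀ := (exists_convergesTo f).choose_spec
  refine v.tendsto_of_tendsto_sub (hv.tendsto_map_sub hc₀ hc) (tendsto_nhds_limUnder ?_)
  rcases hv.tendsto_top_or_eventually_eq hc₀ with h | ⟨ρ, h⟩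
  exacts [⟨⊤, h⟩, ⟨ρ, tendsto_const_nhds.congr' (h.mono fun _ => Eq.symm)⟩]

theorem completionVal_eq (hv : v.Dominates) (hc : ConvergesTo c f) {γ : WithTop ℝ}
    (h : Tendsto (fun n => v (c n)) atTop (𝓝 γ)) : completionVal v f = γ :=
  tendsto_nhds_unique (hv.tendsto_completionVal hc) h

theorem completionVal_eq_of_eventually (hv : v.Dominates) (hc : ConvergesTo c f) {γ : WithTop ℝ}
    (h : ∀ᶠ n in atTop, v (c n) = γ) : completionVal v f = γ :=
  hv.completionVal_eq hc (tendsto_const_nhds.congr' (h.mono fun _ => Eq.symm))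

theorem eventually_eq_completionVal (hv : v.Dominates) (hc : ConvergesTo c f)
    (hf : completionVal v f ≠ ⊤) : ∀ᶠ n in atTop, v (c n) = completionVal v f := by
  rcases hv.tendsto_top_or_eventually_eq hc with h | ⟨ρ, h⟩
  · exact absurd (hv.completionVal_eq hc h) hf
  · rwa [hv.completionVal_eq_of_eventually hc h]

theorem completionVal_algebraMap (hv : v.Dominates) (x : A) :
    completionVal v (algebraMap A (AdicCompletion (maximalIdeal A) A) x) = v x :=
  hv.completionVal_eq (convergesTo_algebraMap x) tendsto_const_nhds

theorem min_le_completionVal_add (hv : v.Dominates) (f f' : AdicCompletion (maximalIdeal A) A) :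
    min (completionVal v f) (completionVal v f') ≤ completionVal v (f + f') := by
  obtain ⟨c, hc⟩ := exists_convergesTo f
  obtain ⟨c', hc'⟩ := exists_convergesTo f'
  exact le_of_tendsto_of_tendsto'
    ((hv.tendsto_completionVal hc).min (hv.tendsto_completionVal hc'))
    (hv.tendsto_completionVal (hc.add hc')) fun n => v.map_add _ _

/-- If one factor has infinite value, so has the product, because `v ≥ 0` on `A`. -/
theorem completionVal_mul (hv : v.Dominates) (f f' : AdicCompletion (maximalIdeal A) A) :
    completionVal v (f * f') = completionVal v f + completionVal v f' := by
  obtain ⟨c, hc⟩ := exists_convergesTo f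
  obtain ⟨c', hc'⟩ := exists_convergesTo f'
  have hcc' := hv.tendsto_completionVal (hc.mul hc')
  by_cases hf : completionVal v f = ⊤
  · rw [hf, top_add]
    refine tendsto_nhds_unique hcc' (tendsto_nhds_top_mono' (hf ▸ hv.tendsto_completionVal hc)
      fun n => ?_)
    simpa [v.map_mul] using le_add_of_nonneg_right (hv.nonneg (c' n))
  by_cases hf' : completionVal v f' = ⊤
  · rw [hf', add_top]
    refine tendsto_nhds_unique hcc' (tendsto_nhds_top_mono' (hf' ▸ hv.tendsto_completionVal hc')
      fun n => ?_)
    simpa [v.map_mul] using le_add_of_nonneg_left (hv.nonneg (c n))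
  refine hv.completionVal_eq_of_eventually (hc.mul hc') ?_
  filter_upwards [hv.eventually_eq_completionVal hc hf, hv.eventually_eq_completionVal hc' hf']
    with n h h'
  simp [v.map_mul, h, h']

noncomputable def completionAddValuation (hv : v.Dominates) :
    AddValuation (AdicCompletion (maximalIdeal A) A) (WithTop ℝ) :=
  AddValuation.of (completionVal v) (by simpa using hv.completionVal_algebraMap 0)
    (by simpa using hv.completionVal_algebraMap 1) hv.min_le_completionVal_add
    hv.completionVal_mul

theorem completionAddValuation_apply (hv : v.Dominates) (f : AdicCompletion (maximalIdeal A) A) :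
    hv.completionAddValuation f = completionVal v f := rfl

theorem mem_supp_completionAddValuation_iff (hv : v.Dominates)
    (f : AdicCompletion (maximalIdeal A) A) :
    f ∈ hv.completionAddValuation.supp ↔
      ∃ c, IsAdicCauchy c ∧ ConvergesTo c f ∧ Tendsto (fun n => v (c n)) atTop (𝓝 ⊤) := by
  rw [AddValuation.mem_supp_iff, completionAddValuation_apply]
  refine ⟨fun hf => ?_, fun ⟨c, _, hc, h⟩ => hv.completionVal_eq hc h⟩
  obtain ⟨c, hc⟩ := exists_convergesTo f
  exact ⟨c, hc.isAdicCauchy, hc, hf ▸ hv.tendsto_completionVal hc⟩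

theorem completionVal_nonneg (hv : v.Dominates) (f : AdicCompletion (maximalIdeal A) A) :
    0 ≤ completionVal v f := by
  obtain ⟨c, hc⟩ := exists_convergesTo f
  exact ge_of_tendsto' (hv.tendsto_completionVal hc) fun n => hv.nonneg _

theorem completionVal_pos (hv : v.Dominates) {f : AdicCompletion (maximalIdeal A) A}
    (hf : f ∈ maximalIdeal (AdicCompletion (maximalIdeal A) A)) : 0 < completionVal v f := by
  by_cases htop : completionVal v f = ⊤
  · exact htop ▸ WithTop.coe_lt_top 0
  obtain ⟨c, hc⟩ := exists_convergesTo f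
  obtain ⟨N, hN⟩ := hc 1
  obtain ⟨n, hn, hNn⟩ :=
    ((hv.eventually_eq_completionVal hc htop).and (eventually_ge_atTop N)).exists
  have hcn := hN n hNn
  rw [AdicCompletion.eval_apply, (AdicCompletion.mem_maximalIdeal_iff_eval_one_eq_zero f).1 hf,
    eq_comm, Submodule.Quotient.mk_eq_zero] at hcn
  exact hn ▸ hv.pos _ (by simpa using hcn)

theorem exists_le_completionVal_sub (hv : v.Dominates) (f : AdicCompletion (maximalIdeal A) A)
    (r : ℝ) : ∃ a : A, r ≤ completionVal v (f - algebraMap A _ a) := by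
  obtain ⟨c, hc⟩ := exists_convergesTo f
  obtain ⟨N, hN⟩ := hv.exists_lt_map_sub hc hc r
  exact ⟨c N, ge_of_tendsto (hv.tendsto_completionVal (hc.sub (convergesTo_algebraMap (c N))))
    (eventually_atTop.2 ⟨N, fun n hn => (hN n N hn le_rfl).le⟩)⟩

noncomputable abbrev fractionRingValuation (hv : v.Dominates) :
    AddValuation (FractionRing (AdicCompletion (maximalIdeal A) A ⧸ hv.completionAddValuation.supp))
      (WithTop ℝ) :=
  hv.completionAddValuation.extendToFractionRingQuotSupp

theorem fractionRingValuation_algebraMap_mk (hv : v.Dominates)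
    (f : AdicCompletion (maximalIdeal A) A) :
    hv.fractionRingValuation (algebraMap _ _ (Ideal.Quotient.mk hv.completionAddValuation.supp f)) =
      completionVal v f :=
  hv.completionAddValuation.extendToFractionRingQuotSupp_algebraMap_mk f

theorem fractionRingValuation_algebraMap_mk_algebraMap (hv : v.Dominates) (x : A) :
    hv.fractionRingValuation (algebraMap _ _
      (Ideal.Quotient.mk hv.completionAddValuation.supp (algebraMap A _ x))) = v x :=
  (hv.fractionRingValuation_algebraMap_mk _).trans (hv.completionVal_algebraMap x)

theorem fractionRingValuation_nonneg (hv : v.Dominates)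
    (g : AdicCompletion (maximalIdeal A) A ⧸ hv.completionAddValuation.supp) :
    0 ≤ hv.fractionRingValuation (algebraMap _ _ g) := by
  obtain ⟨f, rfl⟩ := Ideal.Quotient.mk_surjective g
  rw [fractionRingValuation_algebraMap_mk]
  exact hv.completionVal_nonneg f

theorem fractionRingValuation_pos (hv : v.Dominates)
    {g : AdicCompletion (maximalIdeal A) A ⧸ hv.completionAddValuation.supp} (hg : ¬IsUnit g) :
    0 < hv.fractionRingValuation (algebraMap _ _ g) := by
  obtain ⟨f, rfl⟩ := Ideal.Quotient.mk_surjective g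
  rw [fractionRingValuation_algebraMap_mk]
  exact hv.completionVal_pos fun hf => hg (hf.map _)

theorem exists_le_fractionRingValuation_sub (hv : v.Dominates)
    (g : AdicCompletion (maximalIdeal A) A ⧸ hv.completionAddValuation.supp) (r : ℝ) :
    ∃ a : A, (r : WithTop ℝ) ≤ hv.fractionRingValuation
      (algebraMap _ _ g -
        algebraMap _ _ (Ideal.Quotient.mk hv.completionAddValuation.supp (algebraMap A _ a))) := by
  obtain ⟨f, rfl⟩ := Ideal.Quotient.mk_surjective g
  obtain ⟨a, ha⟩ := hv.exists_le_completionVal_sub f r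
  exact ⟨a, by rwa [← _root_.map_sub, ← _root_.map_sub, fractionRingValuation_algebraMap_mk]⟩

end AddValuation.Dominates

end Completion

theorem unique_extension_to_completion_mod_p_infinity_is_immediate_general
    (ν : FractionRing R → ℝ)
    (hmul : ∀ x y : FractionRing R, x ≠ 0 → y ≠ 0 → ν (x * y) = ν x + ν y)
    (hadd : ∀ x y : FractionRing R, x ≠ 0 → y ≠ 0 → x + y ≠ 0 →
      min (ν x) (ν y) ≤ ν (x + y))
    (hR : ∀ x : R, x ≠ 0 → 0 ≤ ν (algebraMap R (FractionRing R) x))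
    (hm : ∀ x : R, x ∈ IsLocalRing.maximalIdeal R → x ≠ 0 →
      0 < ν (algebraMap R (FractionRing R) x))
    (P : Ideal (AdicCompletion (IsLocalRing.maximalIdeal R) R))
    (hPmem : ∀ f, f ∈ P ↔ ∃ c : ℕ → R, IsAdicCauchy c ∧ ConvergesTo c f ∧
      HasInfiniteValue ν c) :
    -- the target field `K̄ = Q(R̂/P)` and the natural map `ι : R → K̄`
    letI A := AdicCompletion (IsLocalRing.maximalIdeal R) R
    letI Kbar := FractionRing (A ⧸ P)
    letI ι : R → Kbar := fun x =>
      algebraMap (A ⧸ P) Kbar (Ideal.Quotient.mk P (algebraMap R A x))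
    ∃ w : Kbar → ℝ,
      -- `w = ν̄` is a valuation on `K̄`
      (∀ x y : Kbar, x ≠ 0 → y ≠ 0 → w (x * y) = w x + w y) ∧
      (∀ x y : Kbar, x ≠ 0 → y ≠ 0 → x + y ≠ 0 → min (w x) (w y) ≤ w (x + y)) ∧
      -- `w` is given by the limit formula, hence well defined independently of the
      -- choice of Cauchy sequence
      (∀ (f : A) (c : ℕ → R), IsAdicCauchy c → ConvergesTo c f →
        ∀ ρ : ℝ, (∃ N, ∀ n, N ≤ n → c n ≠ 0 ∧
            ν (algebraMap R (FractionRing R) (c n)) = ρ) →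
          w (algebraMap (A ⧸ P) Kbar (Ideal.Quotient.mk P f)) = ρ) ∧
      -- `w` extends `ν`
      (∀ x : R, x ≠ 0 → w (ι x) = ν (algebraMap R (FractionRing R) x)) ∧
      -- `w` dominates `R̂/P`
      (∀ g : A ⧸ P, g ≠ 0 → 0 ≤ w (algebraMap (A ⧸ P) Kbar g)) ∧
      (∀ g : A ⧸ P, g ≠ 0 → ¬ IsUnit g → 0 < w (algebraMap (A ⧸ P) Kbar g)) ∧
      -- same value group: `Γ_{V̄} = Γ_V` as subgroups of `ℝ`
      ({r : ℝ | ∃ ξ : Kbar, ξ ≠ 0 ∧ w ξ = r} =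
        {r : ℝ | ∃ x : FractionRing R, x ≠ 0 ∧ ν x = r}) ∧
      -- same residue field: every residue of `V̄` is the residue of an element of `V`
      (∀ ξ : Kbar, ξ ≠ 0 → w ξ = 0 →
        ∃ a b : R, b ≠ 0 ∧
          (a = 0 ∨ ν (algebraMap R (FractionRing R) b) ≤
            ν (algebraMap R (FractionRing R) a)) ∧
          (ξ * ι b = ι a ∨ w (ξ * ι b - ι a) > w (ι b))) := by
  set v := (AddValuation.ofReal ν hmul hadd).comap (algebraMap R (FractionRing R))
  have hv : v.Dominates := AddValuation.dominates_comap_ofReal ν hmul hadd hR hm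
  obtain rfl : P = hv.completionAddValuation.supp := Ideal.ext fun f => by
    simp only [hPmem, hv.mem_supp_completionAddValuation_iff,
      AddValuation.hasInfiniteValue_iff_tendsto ν hmul hadd]
    exact Iff.rfl
  set V := hv.fractionRingValuation
  have hVι := hv.fractionRingValuation_algebraMap_mk_algebraMap
  refine ⟨fun ξ => (V ξ).untop₀, fun x y => V.untop₀_map_mul,
    fun x y => V.min_untop₀_le_untop₀_map_add, ?_, ?_,
    fun g _ => WithTop.untop₀_nonneg.2 (hv.fractionRingValuation_nonneg g), ?_,
    AddValuation.setOf_untop₀_eq_of_approx ν hmul hadd hv.exists_le_fractionRingValuation_sub hVι,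
    fun ξ => AddValuation.exists_residue_of_approx ν hmul hadd
      hv.exists_le_fractionRingValuation_sub hVι⟩
  · rintro f c - hc ρ ⟨N, hN⟩
    have hcρ : ∀ᶠ n in atTop, v (c n) = ρ := eventually_atTop.2 ⟨N, fun n hn => by
      rw [AddValuation.comap_ofReal_apply ν hmul hadd (hN n hn).1, (hN n hn).2]⟩
    dsimp only
    rw [hv.fractionRingValuation_algebraMap_mk, hv.completionVal_eq_of_eventually hc hcρ,
      WithTop.untop₀_coe]
  · intro x hx
    dsimp only
    rw [hVι, AddValuation.comap_ofReal_apply ν hmul hadd hx, WithTop.untop₀_coe]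
  · intro g hg hnu
    dsimp only
    rw [← WithTop.coe_lt_coe,
      V.coe_untop₀ ((map_ne_zero_iff _ (IsFractionRing.injective _ _)).2 hg)]
    exact hv.fractionRingValuation_pos hnu

/-- Let `R` be a Noetherian local domain dominated by a rank 1
valuation ring `V` of its quotient field `K`, with additive real-valued valuation
`ν`, let `P = p(R̂)_∞` be the prime of elements of infinite value in the completion
`R̂`, and let `K̄` be the quotient field of `R̂/P`.  Then the function
`ν̄ (f + P) = lim ν (fₙ)` (eventually constant value along a Cauchy sequence
converging to `f`) is a well-defined valuation on `K̄` extending `ν`, dominating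
`R̂/P`, with the same value group and the same residue field as `ν`; i.e.
`(V̄, K̄)` is an immediate extension of `(V, K)`. -/
theorem unique_extension_to_completion_mod_p_infinity_is_immediate
    (ν : FractionRing R → ℝ)
    (hmul : ∀ x y : FractionRing R, x ≠ 0 → y ≠ 0 → ν (x * y) = ν x + ν y)
    (hadd : ∀ x y : FractionRing R, x ≠ 0 → y ≠ 0 → x + y ≠ 0 →
      min (ν x) (ν y) ≤ ν (x + y))
    (hR : ∀ x : R, x ≠ 0 → 0 ≤ ν (algebraMap R (FractionRing R) x))
    (hm : ∀ x : R, x ∈ IsLocalRing.maximalIdeal R → x ≠ 0 →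
      0 < ν (algebraMap R (FractionRing R) x))
    (P : Ideal (AdicCompletion (IsLocalRing.maximalIdeal R) R))
    (hPmem : ∀ f, f ∈ P ↔ ∃ c : ℕ → R, IsAdicCauchy c ∧ ConvergesTo c f ∧
      HasInfiniteValue ν c)
    (hP : P.IsPrime) :
    -- the target field `K̄ = Q(R̂/P)` and the natural map `ι : R → K̄`
    letI A := AdicCompletion (IsLocalRing.maximalIdeal R) R
    letI Kbar := FractionRing (A ⧸ P)
    letI ι : R → Kbar := fun x =>
      algebraMap (A ⧸ P) Kbar (Ideal.Quotient.mk P (algebraMap R A x))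
    ∃ w : Kbar → ℝ,
      -- `w = ν̄` is a valuation on `K̄`
      (∀ x y : Kbar, x ≠ 0 → y ≠ 0 → w (x * y) = w x + w y) ∧
      (∀ x y : Kbar, x ≠ 0 → y ≠ 0 → x + y ≠ 0 → min (w x) (w y) ≤ w (x + y)) ∧
      -- `w` is given by the limit formula, hence well defined independently of the
      -- choice of Cauchy sequence
      (∀ (f : A) (c : ℕ → R), IsAdicCauchy c → ConvergesTo c f →
        ∀ ρ : ℝ, (∃ N, ∀ n, N ≤ n → c n ≠ 0 ∧
            ν (algebraMap R (FractionRing R) (c n)) = ρ) →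
          w (algebraMap (A ⧸ P) Kbar (Ideal.Quotient.mk P f)) = ρ) ∧
      -- `w` extends `ν`
      (∀ x : R, x ≠ 0 → w (ι x) = ν (algebraMap R (FractionRing R) x)) ∧
      -- `w` dominates `R̂/P`
      (∀ g : A ⧸ P, g ≠ 0 → 0 ≤ w (algebraMap (A ⧸ P) Kbar g)) ∧
      (∀ g : A ⧸ P, g ≠ 0 → ¬ IsUnit g → 0 < w (algebraMap (A ⧸ P) Kbar g)) ∧
      -- same value group: `Γ_{V̄} = Γ_V` as subgroups of `ℝ`
      ({r : ℝ | ∃ ξ : Kbar, ξ ≠ 0 ∧ w ξ = r} =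
        {r : ℝ | ∃ x : FractionRing R, x ≠ 0 ∧ ν x = r}) ∧
      -- same residue field: every residue of `V̄` is the residue of an element of `V`
      (∀ ξ : Kbar, ξ ≠ 0 → w ξ = 0 →
        ∃ a b : R, b ≠ 0 ∧
          (a = 0 ∨ ν (algebraMap R (FractionRing R) b) ≤
            ν (algebraMap R (FractionRing R) a)) ∧
          (ξ * ι b = ι a ∨ w (ξ * ι b - ι a) > w (ι b))) :=
  unique_extension_to_completion_mod_p_infinity_is_immediate_general ν hmul hadd hR hm P hPmem

end
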